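/- Suppose Δ_N restricted to D_0(N,k) is a linear automorphism (which holds since its eigenvalues -l(l+1), l ≥ 1, are nonzero). Then the flow of the quantized Euler equations Ẇ = [Δ_N^{-1} W, W] preserves D_0(N,k): if W(0) ∈ D_0(N,k), then W(t) ∈ D_0(N,k) for all t, since the vector field W ↦ [Δ_N^{-1}W, W] is tangent to the subalgebra D_0(N,k). -/

import Mathlib

/-!
The field `F W = c [Δ⁻¹ W, W]` maps `D₀(N,k)` into itself, since `D₀(N,k)` is a Lie subalgebra
stable under `Δ⁻¹`. Such tangency of a locally Lipschitz field to a closed complemented subspace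
`S` already gives invariance: if `Q` is a continuous projection with kernel `S`, then `q = Q W`
satisfies `q' = Q (F W - F (W - q))` because `F (W - q) ∈ S`, so `‖q'‖ ≤ K ‖q‖` on every
bounded time interval, and Grönwall's inequality with `q 0 = 0` forces `q = 0`.
-/

open Matrix

attribute [local instance] Matrix.normedAddCommGroup Matrix.normedSpace
attribute [local instance] LieRing.ofAssociativeRing

lemma banded_mul {N k : ℕ} {A B : Matrix (Fin N) (Fin N) ℂ}
    (hA : ∀ i j : Fin N, ¬ ((k : ℤ) ∣ ((i : ℤ) - (j : ℤ))) → A i j = 0)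
    (hB : ∀ i j : Fin N, ¬ ((k : ℤ) ∣ ((i : ℤ) - (j : ℤ))) → B i j = 0) :
    ∀ i j : Fin N, ¬ ((k : ℤ) ∣ ((i : ℤ) - (j : ℤ))) → (A * B) i j = 0 := by
  intro i j h
  rw [Matrix.mul_apply]
  apply Finset.sum_eq_zero
  intro x _
  by_cases h1 : (k : ℤ) ∣ ((i : ℤ) - (x : ℤ))
  · by_cases h2 : (k : ℤ) ∣ ((x : ℤ) - (j : ℤ))
    · exact absurd (by have := dvd_add h1 h2; simpa using this) h
    · rw [hB x j h2, mul_zero]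
  · rw [hA i x h1, zero_mul]

/-- `D₀(N,k) = D(N,k) ∩ su(N)`: traceless skew-Hermitian matrices supported on
diagonals at multiples of `k`, as a real Lie subalgebra. -/
def D0Sub (N k : ℕ) : LieSubalgebra ℝ (Matrix (Fin N) (Fin N) ℂ) where
  carrier := {A | Aᴴ = -A ∧ A.trace = 0 ∧
      ∀ i j : Fin N, ¬ ((k : ℤ) ∣ ((i : ℤ) - (j : ℤ))) → A i j = 0}
  add_mem' := by
    intro A B hA hB
    refine ⟨?_, ?_, ?_⟩
    · simp only [Matrix.conjTranspose_add, hA.1, hB.1]; abel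
    · simp [Matrix.trace_add, hA.2.1, hB.2.1]
    · intro i j h
      simp [Matrix.add_apply, hA.2.2 i j h, hB.2.2 i j h]
  zero_mem' := ⟨by simp, by simp, fun i j _ => rfl⟩
  smul_mem' := by
    intro c A hA
    refine ⟨by simp [Matrix.conjTranspose_smul, hA.1], ?_, fun i j h => ?_⟩
    · rw [Matrix.trace_smul, hA.2.1, smul_zero]
    · simp [Matrix.smul_apply, hA.2.2 i j h]
  lie_mem' := by
    intro A B hA hB
    refine ⟨?_, ?_, ?_⟩
    · simp only [Ring.lie_def, Matrix.conjTranspose_sub, Matrix.conjTranspose_mul, hA.1, hB.1]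
      noncomm_ring
    · simp only [Ring.lie_def, Matrix.trace_sub, Matrix.trace_mul_comm A B, sub_self]
    · intro i j h
      simp only [Ring.lie_def, Matrix.sub_apply]
      rw [banded_mul hA.2.2 hB.2.2 i j h, banded_mul hB.2.2 hA.2.2 i j h, sub_zero]

section Gronwall

variable {E : Type*} [NormedAddCommGroup E] [NormedSpace ℝ E]

theorem eq_zero_of_norm_deriv_le_mul_norm_of_nonneg {f f' : ℝ → E}
    (hf : ∀ t, HasDerivAt f (f' t) t) (h0 : f 0 = 0)
    (bound : ∀ T, ∃ K, ∀ t ∈ Set.Icc (-T) T, ‖f' t‖ ≤ K * ‖f t‖) {t : ℝ} (ht : 0 ≤ t) :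
    f t = 0 := by
  obtain ⟨K, hK⟩ := bound t
  exact eq_zero_of_abs_deriv_le_mul_abs_self_of_eq_zero_right
    (HasDerivAt.continuousOn fun s _ => hf s) (fun s _ => (hf s).hasDerivWithinAt) h0
    (fun s hs => hK s ⟨by linarith [hs.1], hs.2.le⟩) t ⟨ht, le_rfl⟩

theorem eq_zero_of_norm_deriv_le_mul_norm {f f' : ℝ → E}
    (hf : ∀ t, HasDerivAt f (f' t) t) (h0 : f 0 = 0)
    (bound : ∀ T, ∃ K, ∀ t ∈ Set.Icc (-T) T, ‖f' t‖ ≤ K * ‖f t‖) (t : ℝ) : f t = 0 := by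
  rcases le_total 0 t with ht | ht
  · exact eq_zero_of_norm_deriv_le_mul_norm_of_nonneg hf h0 bound ht
  · have hrev : ∀ s, HasDerivAt (fun s => f (-s)) (-f' (-s)) s := fun s => by
      simpa using (hf (0 - s)).comp_const_sub 0 s
    have bound_rev : ∀ T, ∃ K, ∀ s ∈ Set.Icc (-T) T, ‖-f' (-s)‖ ≤ K * ‖f (-s)‖ := fun T =>
      (bound T).imp fun K hK s hs => by
        simpa using hK (-s) ⟨by linarith [hs.2], by linarith [hs.1]⟩
    simpa using eq_zero_of_norm_deriv_le_mul_norm_of_nonneg hrev (by simpa using h0) bound_rev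
      (neg_nonneg.2 ht)

end Gronwall

theorem Submodule.mem_of_hasDerivAt_of_mapsTo {E : Type*} [NormedAddCommGroup E]
    [NormedSpace ℝ E] {S : Submodule ℝ E} (hS : S.ClosedComplemented) {F : E → E}
    (hF : LocallyLipschitz F) (hFS : Set.MapsTo F S S) {W : ℝ → E}
    (hW : ∀ t, HasDerivAt W (F (W t)) t) (hW0 : W 0 ∈ S) (t : ℝ) : W t ∈ S := by
  obtain ⟨P, hP⟩ := hS
  set Q : E →L[ℝ] E := ContinuousLinearMap.id ℝ E - S.subtypeL ∘L P
  have sub_Q_mem : ∀ x, x - Q x ∈ S := fun x => by simp [Q]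
  have Q_eq_zero : ∀ x ∈ S, Q x = 0 := fun x hx => by simp [Q, hP ⟨x, hx⟩]
  suffices Q (W t) = 0 by simpa [this] using sub_Q_mem (W t)
  refine eq_zero_of_norm_deriv_le_mul_norm (fun t => Q.hasFDerivAt.comp_hasDerivAt t (hW t))
    (Q_eq_zero _ hW0) (fun T => ?_) t
  have hWc : Continuous W := continuous_iff_continuousAt.2 fun t => (hW t).continuousAt
  have hC : IsCompact (W '' Set.Icc (-T) T ∪ (fun s => W s - Q (W s)) '' Set.Icc (-T) T) :=
    (isCompact_Icc.image hWc).union (isCompact_Icc.image (hWc.sub (Q.continuous.comp hWc)))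
  obtain ⟨K, hK⟩ := hF.locallyLipschitzOn.exists_lipschitzOnWith_of_compact hC
  refine ⟨‖Q‖ * K, fun s hs => ?_⟩
  calc ‖Q (F (W s))‖ = ‖Q (F (W s) - F (W s - Q (W s)))‖ := by
        rw [map_sub, Q_eq_zero _ (hFS (sub_Q_mem _)), sub_zero]
    _ ≤ ‖Q‖ * (K * ‖W s - (W s - Q (W s))‖) := by
        refine Q.le_opNorm_of_le ?_
        simpa only [dist_eq_norm] using hK.dist_le_mul _ (Or.inl ⟨s, hs, rfl⟩) _
          (Or.inr ⟨s, hs, rfl⟩)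
    _ = ‖Q‖ * K * ‖Q (W s)‖ := by rw [sub_sub_cancel, mul_assoc]

section MatrixCalculus

variable {𝕜 E α : Type*} [NontriviallyNormedField 𝕜] [NormedAddCommGroup E] [NormedSpace 𝕜 E]
  [NormedRing α] [NormedAlgebra 𝕜 α] {l m n : Type*} [Fintype l] [Fintype m] [Fintype n]
  {k : WithTop ℕ∞}

theorem ContDiff.matrix_mul {f : E → Matrix l m α} {g : E → Matrix m n α}
    (hf : ContDiff 𝕜 k f) (hg : ContDiff 𝕜 k g) : ContDiff 𝕜 k fun x => f x * g x := by
  have hf' := fun i j => contDiff_pi.1 (contDiff_pi.1 hf i) j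
  have hg' := fun i j => contDiff_pi.1 (contDiff_pi.1 hg i) j
  exact contDiff_pi.2 fun i => contDiff_pi.2 fun j => by simp only [mul_apply]; fun_prop

end MatrixCalculus

section EulerField

variable {n : Type*} [Fintype n]

noncomputable def eulerField (c : ℝ) (Δinv : Matrix n n ℂ →ₗ[ℝ] Matrix n n ℂ)
    (A : Matrix n n ℂ) : Matrix n n ℂ :=
  c • (Δinv A * A - A * Δinv A)

theorem contDiff_eulerField (c : ℝ) (Δinv : Matrix n n ℂ →ₗ[ℝ] Matrix n n ℂ) :
    ContDiff ℝ 1 (eulerField c Δinv) := by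
  have hΔ : ContDiff ℝ 1 Δinv := (LinearMap.toContinuousLinearMap Δinv).contDiff
  exact ((hΔ.matrix_mul contDiff_id).sub (contDiff_id.matrix_mul hΔ)).const_smul c

theorem eulerField_mem [DecidableEq n] (c : ℝ) {Δinv : Matrix n n ℂ →ₗ[ℝ] Matrix n n ℂ}
    {L : LieSubalgebra ℝ (Matrix n n ℂ)} (hΔ : ∀ A ∈ L, Δinv A ∈ L) {A : Matrix n n ℂ}
    (hA : A ∈ L) : eulerField c Δinv A ∈ L := by
  simpa only [eulerField, Ring.lie_def] using L.smul_mem c (L.lie_mem (hΔ A hA) hA)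

end EulerField

theorem euler_flow_preserves_D0_general (N k : ℕ)
    (Δinv : Matrix (Fin N) (Fin N) ℂ →ₗ[ℝ] Matrix (Fin N) (Fin N) ℂ)
    (hΔ : ∀ A ∈ D0Sub N k, Δinv A ∈ D0Sub N k)
    (W : ℝ → Matrix (Fin N) (Fin N) ℂ)
    (hW : ∀ t : ℝ, HasDerivAt W
      (((N : ℝ) ^ ((3 : ℝ) / 2)) • (Δinv (W t) * W t - W t * Δinv (W t))) t)
    (hW0 : W 0 ∈ D0Sub N k) :
    (∀ A ∈ D0Sub N k,
      ((N : ℝ) ^ ((3 : ℝ) / 2)) • (Δinv A * A - A * Δinv A) ∈ D0Sub N k) ∧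
    ∀ t : ℝ, W t ∈ D0Sub N k := by
  have tangent : ∀ A ∈ D0Sub N k, eulerField ((N : ℝ) ^ ((3 : ℝ) / 2)) Δinv A ∈ D0Sub N k :=
    fun A hA => eulerField_mem _ hΔ hA
  -- instance search misses this through the local `Matrix` norm instance
  have : LocallyConvexSpace ℝ (Matrix (Fin N) (Fin N) ℂ) := NormedSpace.toLocallyConvexSpace
  exact ⟨tangent, Submodule.mem_of_hasDerivAt_of_mapsTo
    (Submodule.ClosedComplemented.of_finiteDimensional (D0Sub N k).toSubmodule)
    (contDiff_eulerField _ Δinv).locallyLipschitz tangent hW hW0⟩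

/-- Invariance of `D₀(N,k)` under the quantized Euler flow: if `Δ_N⁻¹` is a linear
operator preserving `D₀(N,k)` and `W : ℝ → su(N)` is a `C¹` solution of
`Ẇ = [Δ_N⁻¹ W, W]_N` (with `[A,B]_N = N^{3/2}(AB - BA)`) such that `W(0) ∈ D₀(N,k)`,
then `W(t) ∈ D₀(N,k)` for all `t`; indeed the vector field `W ↦ [Δ_N⁻¹ W, W]_N` is
tangent to the Lie subalgebra `D₀(N,k)`. -/
theorem euler_flow_preserves_D0 (N k : ℕ) (hN : 1 ≤ N) (hk : 1 ≤ k) (hkN : k ≤ N)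
    (Δinv : Matrix (Fin N) (Fin N) ℂ →ₗ[ℝ] Matrix (Fin N) (Fin N) ℂ)
    (hΔ : ∀ A ∈ D0Sub N k, Δinv A ∈ D0Sub N k)
    (W : ℝ → Matrix (Fin N) (Fin N) ℂ)
    (hW : ∀ t : ℝ, HasDerivAt W
      (((N : ℝ) ^ ((3 : ℝ) / 2)) • (Δinv (W t) * W t - W t * Δinv (W t))) t)
    (hW0 : W 0 ∈ D0Sub N k) :
    (∀ A ∈ D0Sub N k,
      ((N : ℝ) ^ ((3 : ℝ) / 2)) • (Δinv A * A - A * Δinv A) ∈ D0Sub N k) ∧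
    ∀ t : ℝ, W t ∈ D0Sub N k :=
  euler_flow_preserves_D0_general N k Δinv hΔ W hW hW0
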